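/- arXiv:1712.05612 — 3 statements merged into one kernel-verified Lean document; each statement's English description precedes it below -/
import Mathlib

section
/- For γ ≥ 2 and all ρ, R in [0, r₂], there exists C depending only on r₂, γ such that (R^(γ-1) - ρ^(γ-1))² ≤ C (R^γ - (γ/(γ-1)) ρ R^(γ-1) + (1/(γ-1)) ρ^γ). -/
/-!
Write `p = γ - 1`, `m = (ρ + R) / 2`, and `D = ρ^γ - R^γ - γ R^p (ρ - R)` for the Bregman divergence
of `t ↦ t^γ`, which is `γ - 1` times the relative pressure energy. Adding the tangent-line
inequalities of `t ↦ t^γ` at `m` and at `R` gives `D ≥ γ (m^p - R^p)(ρ - R) / 2`. Convexity and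
`p`-homogeneity of `t ↦ t^p` give `|ρ^p - R^p| ≤ 2^p |m^p - R^p|`, and since `p ≥ 1` the map
`t ↦ t^p` is `p r₂^(p-1)`-Lipschitz on `[0, r₂]`. Multiplying the last two bounds controls
`(ρ^p - R^p)²` by `|m^p - R^p| |ρ - R|`, hence by a multiple of `D`.
-/

open Real Set

theorem Real.rpow_tangent_le {p x y : ℝ} (hp : 1 ≤ p) (hx : 0 ≤ x) (hy : 0 ≤ y) :
    y ^ p + p * y ^ (p - 1) * (x - y) ≤ x ^ p := by
  rcases hy.eq_or_lt with rfl | hy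
  · rcases hp.eq_or_lt with rfl | hp
    · simp
    · simp [zero_rpow (by linarith : p ≠ 0), zero_rpow (by linarith : p - 1 ≠ 0),
        rpow_nonneg hx]
  · have hbern := one_add_mul_self_le_rpow_one_add
      (by rw [le_sub_iff_add_le, neg_add_cancel]; positivity : -1 ≤ x / y - 1) hp
    rw [add_sub_cancel, div_rpow hx hy.le, le_div_iff₀ (rpow_pos_of_pos hy p)] at hbern
    calc y ^ p + p * y ^ (p - 1) * (x - y) = (1 + p * (x / y - 1)) * y ^ p := by
          rw [rpow_sub_one hy.ne']; field_simp
      _ ≤ x ^ p := hbern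

theorem ConvexOn.map_add_map_le_of_mem_Icc {s : Set ℝ} {f : ℝ → ℝ} (hf : ConvexOn ℝ s f)
    {a b x y : ℝ} (ha : a ∈ s) (hb : b ∈ s) (hx : x ∈ Icc a b) (hy : y ∈ Icc a b)
    (hxy : x + y = a + b) : f x + f y ≤ f a + f b := by
  rcases (hx.1.trans hx.2).eq_or_lt with rfl | hab
  · rw [le_antisymm hx.2 hx.1, le_antisymm hy.2 hy.1]
  · have hba : 0 < b - a := sub_pos.2 hab
    set t := (b - x) / (b - a)
    have ht₀ : 0 ≤ t := div_nonneg (by linarith [hx.2]) hba.le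
    have ht₁ : 0 ≤ 1 - t := by
      rw [sub_nonneg, div_le_one hba]; linarith [hx.1]
    have hxt : t • a + (1 - t) • b = x := by
      simp only [t, smul_eq_mul]; field_simp; ring
    have hyt : (1 - t) • a + t • b = y := by
      simp only [smul_eq_mul] at hxt ⊢; linear_combination -hxy - hxt
    have h₁ := hf.2 ha hb ht₀ ht₁ (add_sub_cancel t 1)
    have h₂ := hf.2 ha hb ht₁ ht₀ (sub_add_cancel 1 t)
    rw [hxt] at h₁
    rw [hyt] at h₂
    simp only [smul_eq_mul] at h₁ h₂
    linarith

theorem Real.abs_rpow_sub_rpow_le {p r x y : ℝ} (hp : 1 ≤ p) (hx : x ∈ Icc 0 r)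
    (hy : y ∈ Icc 0 r) : |x ^ p - y ^ p| ≤ p * r ^ (p - 1) * |x - y| := by
  wlog hxy : y ≤ x generalizing x y
  · rw [abs_sub_comm, abs_sub_comm x]; exact this hy hx (le_of_not_ge hxy)
  have hK : x ^ (p - 1) ≤ r ^ (p - 1) := rpow_le_rpow hx.1 hx.2 (by linarith)
  have hmono : y ^ p ≤ x ^ p := rpow_le_rpow hy.1 hxy (by linarith)
  have htan := rpow_tangent_le hp hy.1 hx.1
  rw [abs_of_nonneg (sub_nonneg.2 hmono), abs_of_nonneg (sub_nonneg.2 hxy)]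
  nlinarith [mul_le_mul_of_nonneg_right hK (mul_nonneg (by linarith : 0 ≤ p) (sub_nonneg.2 hxy))]

theorem Real.abs_rpow_sub_rpow_le_two_rpow_mul_abs_midpoint {p x y : ℝ} (hp : 1 ≤ p)
    (hx : 0 ≤ x) (hy : 0 ≤ y) :
    |x ^ p - y ^ p| ≤ 2 ^ p * |((x + y) / 2) ^ p - y ^ p| := by
  have hconv := convexOn_rpow hp
  have hp₀ : 0 ≤ p := by linarith
  rcases le_total x y with hxy | hyx
  · have hmid := hconv.map_add_map_le_of_mem_Icc hx hy (x := (x + y) / 2) (y := (x + y) / 2)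
      ⟨by linarith, by linarith⟩ ⟨by linarith, by linarith⟩ (by ring)
    have hm : ((x + y) / 2) ^ p ≤ y ^ p := rpow_le_rpow (by positivity) (by linarith) hp₀
    have htwo : (2 : ℝ) ≤ 2 ^ p := by
      simpa using rpow_le_rpow_of_exponent_le (by norm_num : (1 : ℝ) ≤ 2) hp
    rw [abs_sub_comm, abs_sub_comm _ (y ^ p), abs_of_nonneg (sub_nonneg.2 hm),
      abs_of_nonneg (sub_nonneg.2 (rpow_le_rpow hx hxy hp₀))]
    nlinarith
  · -- `(2y, x)` is majorized by `(y, x + y)`, and `t ↦ t ^ p` is `p`-homogeneous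
    have hmaj := hconv.map_add_map_le_of_mem_Icc hy (by positivity : (0 : ℝ) ≤ x + y)
      (x := 2 * y) (y := x) ⟨by linarith, by linarith⟩ ⟨hyx, by linarith⟩ (by ring)
    have hm : y ^ p ≤ ((x + y) / 2) ^ p := rpow_le_rpow hy (by linarith) hp₀
    rw [mul_rpow (by norm_num) hy, show x + y = 2 * ((x + y) / 2) by ring,
      mul_rpow (by norm_num) (by positivity)] at hmaj
    rw [abs_of_nonneg (sub_nonneg.2 hm), abs_of_nonneg (sub_nonneg.2 (rpow_le_rpow hy hyx hp₀))]
    linarith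

noncomputable def rpowBregman (γ ρ R : ℝ) : ℝ := ρ ^ γ - R ^ γ - γ * R ^ (γ - 1) * (ρ - R)

theorem rpowBregman_eq_sub_one_mul {γ ρ R : ℝ} (hγ : 1 < γ) (hR : 0 ≤ R) :
    rpowBregman γ ρ R =
      (γ - 1) * (R ^ γ - (γ / (γ - 1)) * ρ * R ^ (γ - 1) + (1 / (γ - 1)) * ρ ^ γ) := by
  have hRγ : R ^ γ = R ^ (γ - 1) * R := by
    rw [← rpow_add_one' hR (by linarith), sub_add_cancel]
  have hγ₁ : γ - 1 ≠ 0 := by linarith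
  unfold rpowBregman
  rw [hRγ]
  field_simp
  ring

theorem mul_midpoint_le_rpowBregman {γ ρ R : ℝ} (hγ : 1 ≤ γ) (hρ : 0 ≤ ρ) (hR : 0 ≤ R) :
    γ * (((ρ + R) / 2) ^ (γ - 1) - R ^ (γ - 1)) * (ρ - R) / 2 ≤ rpowBregman γ ρ R := by
  have hm : 0 ≤ (ρ + R) / 2 := by positivity
  have h₁ := rpow_tangent_le hγ hρ hm
  have h₂ := rpow_tangent_le hγ hm hR
  unfold rpowBregman
  linarith

theorem sq_rpow_sub_rpow_le_rpowBregman {γ r ρ R : ℝ} (hγ : 2 ≤ γ) (hρ : ρ ∈ Icc 0 r)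
    (hR : R ∈ Icc 0 r) :
    (ρ ^ (γ - 1) - R ^ (γ - 1)) ^ 2 ≤
      2 ^ γ * (γ - 1) * r ^ (γ - 2) / γ * rpowBregman γ ρ R := by
  have hp : 1 ≤ γ - 1 := by linarith
  set b := ((ρ + R) / 2) ^ (γ - 1) - R ^ (γ - 1)
  have hlip := abs_rpow_sub_rpow_le hp hρ hR
  have hmid := abs_rpow_sub_rpow_le_two_rpow_mul_abs_midpoint hp hρ.1 hR.1
  have hbreg := mul_midpoint_le_rpowBregman (γ := γ) (by linarith) hρ.1 hR.1
  have hsign : 0 ≤ b * (ρ - R) := by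
    rcases le_total ρ R with h | h
    · exact mul_nonneg_of_nonpos_of_nonpos
        (sub_nonpos.2 (rpow_le_rpow (by linarith [hρ.1]) (by linarith) (by linarith)))
        (sub_nonpos.2 h)
    · exact mul_nonneg
        (sub_nonneg.2 (rpow_le_rpow hR.1 (by linarith) (by linarith))) (sub_nonneg.2 h)
  have hγ₀ : 0 < γ := by linarith
  have hr : 0 ≤ r := hρ.1.trans hρ.2
  calc (ρ ^ (γ - 1) - R ^ (γ - 1)) ^ 2
      = |ρ ^ (γ - 1) - R ^ (γ - 1)| * |ρ ^ (γ - 1) - R ^ (γ - 1)| := by rw [abs_mul_abs_self, sq]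
    _ ≤ ((γ - 1) * r ^ (γ - 1 - 1) * |ρ - R|) * (2 ^ (γ - 1) * |b|) :=
        mul_le_mul hlip hmid (abs_nonneg _) (by positivity)
    _ = 2 ^ γ * (γ - 1) * r ^ (γ - 2) / γ * (γ * b * (ρ - R) / 2) := by
        rw [mul_assoc γ b, ← abs_of_nonneg hsign, abs_mul, rpow_sub_one two_ne_zero,
          show γ - 1 - 1 = γ - 2 by ring]
        field_simp
    _ ≤ 2 ^ γ * (γ - 1) * r ^ (γ - 2) / γ * rpowBregman γ ρ R :=
        mul_le_mul_of_nonneg_left hbreg (by positivity)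

/-- For `γ ≥ 2` and `ρ, R ∈ [0, r₂]` (vacuum allowed), the relative pressure
energy dominates `(R^(γ-1) - ρ^(γ-1))²` up to a constant depending on `r₂, γ`. -/
theorem stmt3 (γ r₂ : ℝ) (hγ : 2 ≤ γ) (hr₂ : 0 < r₂) :
    ∃ C : ℝ, 0 < C ∧ ∀ ρ R : ℝ, ρ ∈ Icc 0 r₂ → R ∈ Icc 0 r₂ →
      (R ^ (γ - 1) - ρ ^ (γ - 1)) ^ 2 ≤
        C * (R ^ γ - (γ / (γ - 1)) * ρ * R ^ (γ - 1) + (1 / (γ - 1)) * ρ ^ γ) := by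
  have hγ₁ : 0 < γ - 1 := by linarith
  refine ⟨2 ^ γ * (γ - 1) ^ 2 * r₂ ^ (γ - 2) / γ, by positivity, fun ρ R hρ hR => ?_⟩
  calc (R ^ (γ - 1) - ρ ^ (γ - 1)) ^ 2 = (ρ ^ (γ - 1) - R ^ (γ - 1)) ^ 2 := by ring
    _ ≤ 2 ^ γ * (γ - 1) * r₂ ^ (γ - 2) / γ * rpowBregman γ ρ R :=
        sq_rpow_sub_rpow_le_rpowBregman hγ hρ hR
    _ = _ := by rw [rpowBregman_eq_sub_one_mul (by linarith) hR.1]; ring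
end

section
/- Let γ > 1, 0 ≤ r₁ < r₂ < ∞ (with r₁ > 0 if γ < 2), and v > 0. Then there exists a constant C depending only on r₁, r₂, v, γ such that for all ρ, R ∈ [r₁, r₂] and all vectors u, U ∈ ℝᵈ with |u|, |U| ≤ v, one has |B(R,U;ρ,u)| ≤ C · A(R,U;ρ,u), where A(R,U;ρ,u) = ½ ρ|u-U|² + R^γ - (γ/(γ-1)) ρ R^(γ-1) + (1/(γ-1)) ρ^γ and B(R,U;ρ,u) = ½ ρ|u-U|² u - (γ/(γ-1))(R^(γ-1) - ρ^(γ-1)) ρ u + (R^γ - ρ^γ) U. -/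
open Real Set

/-!
Write `A = ½ ρ |u - U|² + P(ρ, R)`, where `P` is the Bregman divergence of the internal energy
`ρ ↦ ρ^γ / (γ - 1)`. Substituting `R^γ - ρ^γ = P + (γ/(γ-1)) (R^(γ-1) - ρ^(γ-1)) ρ` gives
`B = ½ ρ |u - U|² u - (γ/(γ-1)) (R^(γ-1) - ρ^(γ-1)) ρ (u - U) + P U`, so by Young's inequality
everything reduces to `ρ (R^(γ-1) - ρ^(γ-1))² ≤ C P(ρ, R)`. Both sides vanish at `ρ = R`, and for
`C` of order `sup ρ^(γ-1)` the derivative in `ρ` of their difference has the sign of `ρ - R`.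
-/

lemma nonneg_of_hasDerivAt_of_sub_mul_nonneg {D : Set ℝ} (hD : Convex ℝ D) {f f' : ℝ → ℝ}
    {c : ℝ} (hc : c ∈ D) (hf : ContinuousOn f D)
    (hf' : ∀ x ∈ interior D, HasDerivAt f (f' x) x) (hfc : f c = 0)
    (hsign : ∀ x ∈ interior D, 0 ≤ (x - c) * f' x) :
    ∀ x ∈ D, 0 ≤ f x := by
  intro x hx
  rcases le_total c x with hcx | hxc
  · have hmono : MonotoneOn f (D ∩ Ici c) := by
      refine monotoneOn_of_hasDerivWithinAt_nonneg (hD.inter (convex_Ici c))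
        (hf.mono inter_subset_left)
        (fun y hy => (hf' y (interior_mono inter_subset_left hy)).hasDerivWithinAt) ?_
      intro y hy
      rw [interior_inter, interior_Ici] at hy
      exact nonneg_of_mul_nonneg_right (hsign y hy.1) (sub_pos.2 hy.2)
    exact hfc ▸ hmono ⟨hc, self_mem_Ici⟩ ⟨hx, hcx⟩ hcx
  · have hanti : AntitoneOn f (D ∩ Iic c) := by
      refine antitoneOn_of_hasDerivWithinAt_nonpos (hD.inter (convex_Iic c))
        (hf.mono inter_subset_left)
        (fun y hy => (hf' y (interior_mono inter_subset_left hy)).hasDerivWithinAt) ?_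
      intro y hy
      rw [interior_inter, interior_Iic] at hy
      have := hsign y hy.1
      nlinarith [sub_neg.2 (mem_Iio.1 hy.2)]
    exact hfc ▸ hanti ⟨hx, hxc⟩ ⟨hc, self_mem_Iic⟩ hxc

lemma sub_mul_rpow_sub_rpow_nonneg {p x y : ℝ} (hp : 0 ≤ p) (hx : 0 ≤ x) (hy : 0 ≤ y) :
    0 ≤ (x - y) * (x ^ p - y ^ p) := by
  rcases le_total y x with h | h
  · exact mul_nonneg (sub_nonneg.2 h) (sub_nonneg.2 (rpow_le_rpow hy h hp))
  · exact mul_nonneg_of_nonpos_of_nonpos (sub_nonpos.2 h) (sub_nonpos.2 (rpow_le_rpow hx h hp))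

lemma hasDerivAt_mul_sq_rpow_sub {p : ℝ} (R : ℝ) {x : ℝ} (hx : 0 < x) :
    HasDerivAt (fun ρ => ρ * (R ^ p - ρ ^ p) ^ 2)
      ((R ^ p - x ^ p) * (R ^ p - (2 * p + 1) * x ^ p)) x := by
  have hpow := hasDerivAt_rpow_const (p := p) (Or.inl hx.ne')
  rw [rpow_sub_one hx.ne'] at hpow
  refine ((hasDerivAt_id' x).mul ((hpow.const_sub _).fun_pow 2)).congr_deriv ?_
  field_simp
  ring

/-- `h(ρ) - h(R) - h'(R) (ρ - R)` for the internal energy `h(ρ) = ρ^γ / (γ - 1)`. -/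
noncomputable def relInternalEnergy (γ ρ R : ℝ) : ℝ :=
  R ^ γ - γ / (γ - 1) * ρ * R ^ (γ - 1) + 1 / (γ - 1) * ρ ^ γ

namespace relInternalEnergy

variable {γ : ℝ}

lemma sub_sub_eq (hγ : 1 < γ) {ρ : ℝ} (hρ : 0 ≤ ρ) (R : ℝ) :
    R ^ γ - ρ ^ γ - γ / (γ - 1) * (R ^ (γ - 1) - ρ ^ (γ - 1)) * ρ = relInternalEnergy γ ρ R := by
  have hγ₁ : γ - 1 ≠ 0 := by linarith
  have hpow : ρ ^ γ = ρ ^ (γ - 1) * ρ := by rw [← rpow_add_one' hρ (by linarith), sub_add_cancel]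
  rw [relInternalEnergy, hpow]
  field_simp
  ring

lemma self_eq_zero (hγ : 1 < γ) {R : ℝ} (hR : 0 ≤ R) : relInternalEnergy γ R R = 0 := by
  rw [← sub_sub_eq hγ hR]
  ring

lemma continuous (hγ : 1 < γ) (R : ℝ) : Continuous fun ρ => relInternalEnergy γ ρ R := by
  unfold relInternalEnergy
  have := continuous_rpow_const (q := γ) (by linarith)
  fun_prop

lemma hasDerivAt (hγ : 1 < γ) (R : ℝ) {x : ℝ} (hx : 0 < x) :
    HasDerivAt (fun ρ => relInternalEnergy γ ρ R) (γ / (γ - 1) * (x ^ (γ - 1) - R ^ (γ - 1))) x := by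
  have hpow := hasDerivAt_rpow_const (p := γ) (x := x) (Or.inl hx.ne')
  have hγ₁ : γ - 1 ≠ 0 := by linarith
  exact (((((hasDerivAt_id' x).const_mul (γ / (γ - 1))).mul_const (R ^ (γ - 1))).const_sub
    (R ^ γ)).add (hpow.const_mul (1 / (γ - 1)))).congr_deriv (by field_simp; ring)

lemma nonneg (hγ : 1 < γ) {ρ R : ℝ} (hρ : 0 ≤ ρ) (hR : 0 ≤ R) : 0 ≤ relInternalEnergy γ ρ R := by
  refine nonneg_of_hasDerivAt_of_sub_mul_nonneg (convex_Ici 0) (mem_Ici.2 hR)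
    (continuous hγ R).continuousOn (fun x hx => hasDerivAt hγ R (interior_Ici.subset hx))
    (self_eq_zero hγ hR) (fun x hx => ?_) ρ hρ
  have hγ' : 0 ≤ γ / (γ - 1) := div_nonneg (by linarith) (by linarith)
  have := sub_mul_rpow_sub_rpow_nonneg (p := γ - 1) (by linarith) (interior_Ici.subset hx).le hR
  nlinarith

lemma mul_sq_rpow_sub_le (hγ : 1 < γ) {M ρ R : ℝ} (hρ : ρ ∈ Icc 0 M) (hR : R ∈ Icc 0 M) :
    ρ * (R ^ (γ - 1) - ρ ^ (γ - 1)) ^ 2 ≤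
      (2 * γ - 1) * (γ - 1) / γ * M ^ (γ - 1) * relInternalEnergy γ ρ R := by
  set C := (2 * γ - 1) * (γ - 1) / γ * M ^ (γ - 1)
  rw [← sub_nonneg]
  refine nonneg_of_hasDerivAt_of_sub_mul_nonneg (convex_Icc 0 M) hR ?_
    (fun x hx => ((hasDerivAt hγ R (interior_Icc.subset hx).1).const_mul C).sub
      (hasDerivAt_mul_sq_rpow_sub R (interior_Icc.subset hx).1))
    (by simp [self_eq_zero hγ hR.1]) (fun x hx => ?_) ρ hρ
  · have := continuous_rpow_const (q := γ - 1) (by linarith)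
    exact (((continuous hγ R).const_mul C).sub (by fun_prop)).continuousOn
  · obtain ⟨hx₀, hxM⟩ := interior_Icc.subset hx
    have hγ₁ : γ - 1 ≠ 0 := by linarith
    have hC : C * (γ / (γ - 1)) = (2 * γ - 1) * M ^ (γ - 1) := by
      simp only [C]
      field_simp
    have hbracket : 0 ≤ (2 * γ - 1) * (M ^ (γ - 1) - x ^ (γ - 1)) + R ^ (γ - 1) :=
      add_nonneg (mul_nonneg (by linarith)
        (sub_nonneg.2 (rpow_le_rpow hx₀.le hxM.le (by linarith)))) (rpow_nonneg hR.1 _)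
    have hsign := sub_mul_rpow_sub_rpow_nonneg (p := γ - 1) (by linarith) hx₀.le hR.1
    calc 0 ≤ (x - R) * (x ^ (γ - 1) - R ^ (γ - 1)) *
          ((2 * γ - 1) * (M ^ (γ - 1) - x ^ (γ - 1)) + R ^ (γ - 1)) := mul_nonneg hsign hbracket
      _ = _ := by linear_combination -(x - R) * (x ^ (γ - 1) - R ^ (γ - 1)) * hC

end relInternalEnergy

lemma norm_flux_le {E : Type*} [NormedAddCommGroup E] [NormedSpace ℝ E] {γ ρ : ℝ} (hγ : 1 < γ)
    (hρ : 0 ≤ ρ) {R : ℝ} (hR : 0 ≤ R) (u U : E) :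
    ‖(2⁻¹ * ρ * ‖u - U‖ ^ 2) • u - ((γ / (γ - 1)) * (R ^ (γ - 1) - ρ ^ (γ - 1)) * ρ) • u
        + (R ^ γ - ρ ^ γ) • U‖
      ≤ 2⁻¹ * ρ * ‖u - U‖ ^ 2 * (‖u‖ + 1)
        + 2⁻¹ * (γ / (γ - 1)) ^ 2 * (ρ * (R ^ (γ - 1) - ρ ^ (γ - 1)) ^ 2)
        + relInternalEnergy γ ρ R * ‖U‖ := by
  have hsplit := relInternalEnergy.sub_sub_eq hγ hρ R
  have hP := relInternalEnergy.nonneg hγ hρ hR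
  have hK : 0 ≤ 2⁻¹ * ρ * ‖u - U‖ ^ 2 := by positivity
  set K := 2⁻¹ * ρ * ‖u - U‖ ^ 2
  set c := γ / (γ - 1)
  set Δ := R ^ (γ - 1) - ρ ^ (γ - 1)
  set P := relInternalEnergy γ ρ R
  have hyoung : |c * Δ * ρ| * ‖u - U‖ ≤ K + 2⁻¹ * c ^ 2 * (ρ * Δ ^ 2) :=
    calc |c * Δ * ρ| * ‖u - U‖ = 2⁻¹ * ρ * (2 * ‖u - U‖ * |c * Δ|) := by
          rw [abs_mul _ ρ, abs_of_nonneg hρ]; ring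
      _ ≤ 2⁻¹ * ρ * (‖u - U‖ ^ 2 + |c * Δ| ^ 2) := by gcongr; exact two_mul_le_add_sq _ _
      _ = K + 2⁻¹ * c ^ 2 * (ρ * Δ ^ 2) := by rw [sq_abs]; ring
  calc ‖K • u - (c * Δ * ρ) • u + (R ^ γ - ρ ^ γ) • U‖
      = ‖K • u - (c * Δ * ρ) • (u - U) + P • U‖ := by
        rw [← hsplit]; congr 1; module
    _ ≤ ‖K • u‖ + ‖(c * Δ * ρ) • (u - U)‖ + ‖P • U‖ :=
        (norm_add_le _ _).trans (by gcongr; exact norm_sub_le _ _)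
    _ = K * ‖u‖ + |c * Δ * ρ| * ‖u - U‖ + P * ‖U‖ := by
        rw [norm_smul, norm_smul, norm_smul, Real.norm_of_nonneg hK, Real.norm_of_nonneg hP,
          Real.norm_eq_abs]
    _ ≤ K * (‖u‖ + 1) + 2⁻¹ * c ^ 2 * (ρ * Δ ^ 2) + P * ‖U‖ := by linarith

theorem stmt5_general (d : ℕ) (γ r₁ r₂ v : ℝ) (hγ : 1 < γ) (hr₁ : 0 ≤ r₁) (hr₁₂ : r₁ < r₂)
    (hv : 0 < v) :
    ∃ C : ℝ, 0 < C ∧ ∀ ρ R : ℝ, ρ ∈ Icc r₁ r₂ → R ∈ Icc r₁ r₂ →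
      ∀ u U : EuclideanSpace ℝ (Fin d), ‖u‖ ≤ v → ‖U‖ ≤ v →
        ‖(2⁻¹ * ρ * ‖u - U‖ ^ 2) • u
            - ((γ / (γ - 1)) * (R ^ (γ - 1) - ρ ^ (γ - 1)) * ρ) • u
            + (R ^ γ - ρ ^ γ) • U‖
          ≤ C * (2⁻¹ * ρ * ‖u - U‖ ^ 2
              + R ^ γ - (γ / (γ - 1)) * ρ * R ^ (γ - 1) + (1 / (γ - 1)) * ρ ^ γ) := by
  set C₂ := (2 * γ - 1) * (γ - 1) / γ * r₂ ^ (γ - 1)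
  have hC₂ : 0 ≤ C₂ :=
    mul_nonneg (div_nonneg (mul_nonneg (by linarith) (by linarith)) (by linarith))
      (rpow_nonneg (hr₁.trans hr₁₂.le) _)
  have hc : 0 ≤ 2⁻¹ * (γ / (γ - 1)) ^ 2 := by positivity
  refine ⟨v + 1 + 2⁻¹ * (γ / (γ - 1)) ^ 2 * C₂, by positivity, ?_⟩
  intro ρ R hρ hR u U hu hU
  have hρ₀ : ρ ∈ Icc 0 r₂ := ⟨hr₁.trans hρ.1, hρ.2⟩
  have hR₀ : R ∈ Icc 0 r₂ := ⟨hr₁.trans hR.1, hR.2⟩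
  have hK : 0 ≤ 2⁻¹ * ρ * ‖u - U‖ ^ 2 := by have := hρ₀.1; positivity
  have hP := relInternalEnergy.nonneg hγ hρ₀.1 hR₀.1
  calc _ ≤ 2⁻¹ * ρ * ‖u - U‖ ^ 2 * (‖u‖ + 1)
          + 2⁻¹ * (γ / (γ - 1)) ^ 2 * (ρ * (R ^ (γ - 1) - ρ ^ (γ - 1)) ^ 2)
          + relInternalEnergy γ ρ R * ‖U‖ := norm_flux_le hγ hρ₀.1 hR₀.1 u U
    _ ≤ 2⁻¹ * ρ * ‖u - U‖ ^ 2 * (v + 1) + 2⁻¹ * (γ / (γ - 1)) ^ 2 * (C₂ * relInternalEnergy γ ρ R)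
          + relInternalEnergy γ ρ R * v := by
        have := relInternalEnergy.mul_sq_rpow_sub_le hγ hρ₀ hR₀
        gcongr
    _ ≤ (v + 1 + 2⁻¹ * (γ / (γ - 1)) ^ 2 * C₂)
          * (2⁻¹ * ρ * ‖u - U‖ ^ 2 + relInternalEnergy γ ρ R) := by
        nlinarith [mul_nonneg (mul_nonneg hc hC₂) hK]
    _ = _ := by rw [relInternalEnergy]; ring

/-- The relative energy flux density `B` is dominated by the relative energy
density `A`, uniformly for densities in `[r₁, r₂]` (with `r₁ > 0` if `γ < 2`)
and velocities of norm at most `v`. -/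
theorem stmt5 (d : ℕ) (γ r₁ r₂ v : ℝ) (hγ : 1 < γ) (hr₁ : 0 ≤ r₁) (hr₁₂ : r₁ < r₂)
    (hvac : γ < 2 → 0 < r₁) (hv : 0 < v) :
    ∃ C : ℝ, 0 < C ∧ ∀ ρ R : ℝ, ρ ∈ Icc r₁ r₂ → R ∈ Icc r₁ r₂ →
      ∀ u U : EuclideanSpace ℝ (Fin d), ‖u‖ ≤ v → ‖U‖ ≤ v →
        ‖(2⁻¹ * ρ * ‖u - U‖ ^ 2) • u
            - ((γ / (γ - 1)) * (R ^ (γ - 1) - ρ ^ (γ - 1)) * ρ) • u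
            + (R ^ γ - ρ ^ γ) • U‖
          ≤ C * (2⁻¹ * ρ * ‖u - U‖ ^ 2
              + R ^ γ - (γ / (γ - 1)) * ρ * R ^ (γ - 1) + (1 / (γ - 1)) * ρ ^ γ) :=
  stmt5_general d γ r₁ r₂ v hγ hr₁ hr₁₂ hv
end

section
/- Let E : [0,T] → [0,∞) be measurable with essential liminf at 0 positive, i.e. there exist T₀, δ > 0 with E(τ) ≥ δ for a.e. τ < T₀. If g ∈ L¹ with ∫₀^τ g(t) dt → 0 as τ → 0 and E(τ) ≤ ∫₀^τ g(t) dt + ∫₀^τ H(t) E(t) dt for a.e. τ, with H ∈ L¹(0,T₀) nonnegative, then one derives E(τ) ≤ ∫₀^τ G(t)E(t) dt for a.e. τ ∈ (0,T₀) for some G ∈ L¹(0,T₀), and hence E ≡ 0 a.e. on (0,T₀), contradicting E ≥ δ. Therefore the essential liminf of E at 0 is 0. -/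
open MeasureTheory Set Filter

lemma tendsto_primitive_aux {T : ℝ} (hT : 0 < T) {f : ℝ → ℝ}
    (hf : IntegrableOn f (Ioo 0 T)) :
    Tendsto (fun τ => ∫ t in (0:ℝ)..τ, f t) (nhdsWithin 0 (Ioi 0)) (nhds 0) := by
  have hfI : IntegrableOn f (uIcc 0 T) := by
    rw [uIcc_of_le hT.le, integrableOn_Icc_iff_integrableOn_Ioo]
    exact hf
  have hcont := intervalIntegral.continuousOn_primitive_interval hfI
  have h0 : (0:ℝ) ∈ uIcc 0 T := left_mem_uIcc
  have htend : Tendsto (fun τ => ∫ t in (0:ℝ)..τ, f t) (nhdsWithin 0 (uIcc 0 T)) (nhds 0) := by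
    have := (hcont 0 h0).tendsto
    simpa using this
  have hmono : nhdsWithin 0 (Ioo 0 T) ≤ nhdsWithin 0 (uIcc 0 T) := by
    apply nhdsWithin_mono
    rw [uIcc_of_le hT.le]
    exact Ioo_subset_Icc_self
  rw [← nhdsWithin_Ioo_eq_nhdsGT hT]
  exact htend.mono_left hmono

/-- The essential liminf at `0` of the localised relative energy is `0`: there is
no `T₀, δ > 0` with `E ≥ δ` a.e. on `(0, T₀)`, given the relative energy
inequality `E(τ) ≤ ∫₀^τ g + ∫₀^τ H E` with `g, H ∈ L¹`, `H ≥ 0`, and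
`∫₀^τ g → 0` as `τ → 0⁺`. -/
theorem stmt10 (T : ℝ) (hT : 0 < T) (E g H : ℝ → ℝ)
    (hEmeas : Measurable E) (hEnonneg : ∀ t, 0 ≤ E t)
    (hEbdd : ∃ M : ℝ, ∀ t ∈ Icc 0 T, E t ≤ M)
    (hgint : IntegrableOn g (Ioo 0 T))
    (hg0 : Tendsto (fun τ => ∫ t in (0:ℝ)..τ, g t) (nhdsWithin 0 (Ioi 0)) (nhds 0))
    (hHint : IntegrableOn H (Ioo 0 T)) (hHnonneg : ∀ t, 0 ≤ H t)
    (hineq : ∀ᵐ τ ∂(volume.restrict (Ioo 0 T)),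
      E τ ≤ (∫ t in (0:ℝ)..τ, g t) + ∫ t in (0:ℝ)..τ, H t * E t) :
    ¬ ∃ T₀ δ : ℝ, 0 < T₀ ∧ T₀ ≤ T ∧ 0 < δ ∧
        ∀ᵐ τ ∂(volume.restrict (Ioo 0 T₀)), δ ≤ E τ := by
  rintro ⟨T₀, δ, hT₀, hT₀T, hδ, hEδ⟩
  obtain ⟨M, hM⟩ := hEbdd
  -- integrability of H * E on (0, T)
  have hHE : IntegrableOn (fun t => H t * E t) (Ioo 0 T) := by
    refine Integrable.mono (hHint.const_mul M) ?_ ?_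
    · exact hHint.aestronglyMeasurable.mul hEmeas.aestronglyMeasurable
    · rw [ae_restrict_iff' measurableSet_Ioo]
      filter_upwards with t ht
      have h1 : 0 ≤ H t * E t := mul_nonneg (hHnonneg t) (hEnonneg t)
      have h2 : E t ≤ M := hM t ⟨ht.1.le, ht.2.le⟩
      rw [Real.norm_eq_abs, Real.norm_eq_abs, abs_of_nonneg h1]
      calc H t * E t ≤ H t * M := mul_le_mul_of_nonneg_left h2 (hHnonneg t)
        _ = M * H t := mul_comm _ _
        _ ≤ |M * H t| := le_abs_self _
  have hHE0 : Tendsto (fun τ => ∫ t in (0:ℝ)..τ, H t * E t)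
      (nhdsWithin 0 (Ioi 0)) (nhds 0) := tendsto_primitive_aux hT hHE
  -- eventually the RHS is < δ
  have hsum : Tendsto (fun τ => (∫ t in (0:ℝ)..τ, g t) + ∫ t in (0:ℝ)..τ, H t * E t)
      (nhdsWithin 0 (Ioi 0)) (nhds 0) := by simpa using hg0.add hHE0
  have hev : ∀ᶠ τ in nhdsWithin 0 (Ioi 0),
      (∫ t in (0:ℝ)..τ, g t) + (∫ t in (0:ℝ)..τ, H t * E t) < δ := by
    have := hsum.eventually (eventually_lt_nhds hδ)
    simpa using this
  obtain ⟨u, hu, huδ⟩ := mem_nhdsGT_iff_exists_Ioo_subset.1 hev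
  set c := min u T₀ with hc
  have hc0 : 0 < c := lt_min hu hT₀
  have hsub1 : Ioo 0 c ⊆ Ioo 0 u := Ioo_subset_Ioo le_rfl (min_le_left _ _)
  have hsub2 : Ioo 0 c ⊆ Ioo 0 T₀ := Ioo_subset_Ioo le_rfl (min_le_right _ _)
  have hsub3 : Ioo 0 c ⊆ Ioo 0 T :=
    hsub2.trans (Ioo_subset_Ioo le_rfl hT₀T)
  have h1 : ∀ᵐ τ ∂(volume.restrict (Ioo 0 c)), δ ≤ E τ :=
    ae_restrict_of_ae_restrict_of_subset hsub2 hEδ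
  have h2 : ∀ᵐ τ ∂(volume.restrict (Ioo 0 c)),
      E τ ≤ (∫ t in (0:ℝ)..τ, g t) + ∫ t in (0:ℝ)..τ, H t * E t :=
    ae_restrict_of_ae_restrict_of_subset hsub3 hineq
  have h3 : ∀ᵐ τ ∂(volume.restrict (Ioo 0 c)), τ ∈ Ioo 0 c :=
    ae_restrict_mem measurableSet_Ioo
  have hfalse : ∀ᵐ τ ∂(volume.restrict (Ioo 0 c)), False := by
    filter_upwards [h1, h2, h3] with τ hδτ hineqτ hmem
    have hlt := huδ (hsub1 hmem)
    exact absurd (hδτ.trans hineqτ) (not_le.2 hlt)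
  have hzero : volume.restrict (Ioo 0 c) univ = 0 := by
    have := hfalse
    rw [ae_iff] at this
    simpa using this
  rw [Measure.restrict_apply_univ, Real.volume_Ioo] at hzero
  simp only [sub_zero] at hzero
  exact (ENNReal.ofReal_pos.2 hc0).ne' hzero
end
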